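/- If A₁ and A₂ are almost dense sequences of positive integers, then the product set A = {a·b : a ∈ A₁, b ∈ A₂} is also almost dense; more precisely, for every ε > 0 there is c > 0 such that #{X ≤ n ≤ 2X : n ∈ A} ≥ c·X^{1−ε/4} for all sufficiently large X. -/
import Mathlib


open Real

/-- A set of positive integers is "almost dense" if for every `ε > 0` there is `c > 0`
with `#{X ≤ n ≤ 2X : n ∈ A} ≥ c·X^{1−ε/4}` for all sufficiently large `X`. -/
def AlmostDense (A : Set ℕ) : Prop :=
  (∀ n ∈ A, 0 < n) ∧
  ∀ ε : ℝ, 0 < ε → ∃ c : ℝ, 0 < c ∧ ∃ X₀ : ℝ, ∀ X : ℝ, X₀ ≤ X →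
    c * X ^ (1 - ε/4) ≤ Nat.card {n : ℕ | n ∈ A ∧ X ≤ (n : ℝ) ∧ (n : ℝ) ≤ 2 * X}

lemma almostDense_nonempty {A : Set ℕ} (h : AlmostDense A) : ∃ b ∈ A, 0 < b := by
  obtain ⟨c, hc, X₀, hX⟩ := h.2 1 one_pos
  set X := max X₀ 1 with hXdef
  have hX1 : (1:ℝ) ≤ X := le_max_right _ _
  have hpos : 0 < c * X ^ (1 - (1:ℝ)/4) :=
    mul_pos hc (Real.rpow_pos_of_pos (lt_of_lt_of_le one_pos hX1) _)
  have h2 := hX X (le_max_left _ _)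
  have hcard : 0 < Nat.card {n : ℕ | n ∈ A ∧ X ≤ (n : ℝ) ∧ (n : ℝ) ≤ 2 * X} := by
    by_contra hcon
    push_neg at hcon
    have h0 : Nat.card {n : ℕ | n ∈ A ∧ X ≤ (n : ℝ) ∧ (n : ℝ) ≤ 2 * X} = 0 :=
      Nat.le_zero.mp hcon
    rw [h0] at h2
    push_cast at h2
    linarith
  obtain ⟨⟨n, hn⟩⟩ := (Nat.card_pos_iff.mp hcard).1
  exact ⟨n, hn.1, h.1 n hn.1⟩

/-- The product set of two almost dense sequences is almost dense. -/
theorem almostDense_mul (A₁ A₂ : Set ℕ) (h₁ : AlmostDense A₁) (h₂ : AlmostDense A₂) :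
    AlmostDense {n : ℕ | ∃ a ∈ A₁, ∃ b ∈ A₂, n = a * b} := by
  obtain ⟨b₀, hb₀A, hb₀⟩ := almostDense_nonempty h₂
  have hb₀R : (0:ℝ) < (b₀ : ℝ) := by exact_mod_cast hb₀
  constructor
  · rintro n ⟨a, ha, b, hb, rfl⟩
    exact Nat.mul_pos (h₁.1 a ha) (h₂.1 b hb)
  · intro ε hε
    obtain ⟨c, hc, X₀, hX⟩ := h₁.2 ε hε
    refine ⟨c / (b₀ : ℝ) ^ (1 - ε/4), div_pos hc (Real.rpow_pos_of_pos hb₀R _),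
      max (X₀ * b₀) 0, fun X hXge => ?_⟩
    have hX0 : (0:ℝ) ≤ X := le_trans (le_max_right _ _) hXge
    have hXdiv : X₀ ≤ X / b₀ := by
      rw [le_div_iff₀ hb₀R]
      exact le_trans (le_max_left _ _) hXge
    have hmain := hX (X / b₀) hXdiv
    -- the two sets
    set S₁ : Set ℕ := {n : ℕ | n ∈ A₁ ∧ X / b₀ ≤ (n : ℝ) ∧ (n : ℝ) ≤ 2 * (X / b₀)} with hS₁
    set S : Set ℕ := {n : ℕ | (n ∈ {n : ℕ | ∃ a ∈ A₁, ∃ b ∈ A₂, n = a * b}) ∧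
        X ≤ (n : ℝ) ∧ (n : ℝ) ≤ 2 * X} with hS
    have hSfin : S.Finite := by
      apply Set.Finite.subset (Set.finite_Iic ⌈2 * X⌉₊)
      intro n hn
      have : (n : ℝ) ≤ 2 * X := hn.2.2
      exact Set.mem_Iic.mpr (by exact_mod_cast this.trans (Nat.le_ceil _))
    have hmap : (fun n => n * b₀) '' S₁ ⊆ S := by
      rintro _ ⟨n, ⟨hnA, hn1, hn2⟩, rfl⟩
      refine ⟨⟨n, hnA, b₀, hb₀A, rfl⟩, ?_, ?_⟩
      · push_cast
        calc X = X / b₀ * b₀ := by field_simp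
        _ ≤ (n : ℝ) * b₀ := by gcongr
      · push_cast
        calc (n : ℝ) * b₀ ≤ 2 * (X / b₀) * b₀ := by gcongr
        _ = 2 * X := by field_simp
    have hinj : Set.InjOn (fun n => n * b₀) S₁ := fun a _ b _ h =>
      Nat.eq_of_mul_eq_mul_right hb₀ h
    have hS₁fin : S₁.Finite := by
      apply Set.Finite.subset (Set.finite_Iic ⌈2 * (X / b₀)⌉₊)
      intro n hn
      have : (n : ℝ) ≤ 2 * (X / b₀) := hn.2.2
      exact Set.mem_Iic.mpr (by exact_mod_cast this.trans (Nat.le_ceil _))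
    have hcard : Nat.card S₁ ≤ Nat.card S := by
      rw [Nat.card_coe_set_eq, Nat.card_coe_set_eq]
      calc S₁.ncard = ((fun n => n * b₀) '' S₁).ncard :=
        (Set.ncard_image_of_injOn hinj).symm
      _ ≤ S.ncard := Set.ncard_le_ncard hmap hSfin
    have hrpow : (X / b₀) ^ (1 - ε/4) = X ^ (1 - ε/4) / (b₀:ℝ) ^ (1 - ε/4) :=
      Real.div_rpow hX0 hb₀R.le _
    calc c / (b₀:ℝ) ^ (1 - ε/4) * X ^ (1 - ε/4)
        = c * ((X / b₀) ^ (1 - ε/4)) := by rw [hrpow]; ring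
      _ ≤ Nat.card S₁ := hmain
      _ ≤ Nat.card S := by exact_mod_cast hcard
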